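/- Let ‖·‖ be a norm on c₀₀ that is permutation-invariant and multiplicative, and suppose ‖1ⁿ‖ = 1 for every n ≥ 1. Then for every x ∈ c₀₀ one has ‖x‖ = ‖x‖_∞ = max_i |x_i|. -/

import Mathlib

/-- Tensor product of finitely supported sequences, regarded as a finitely
supported sequence via a fixed bijection `e : ℕ ≃ ℕ × ℕ`. -/
noncomputable def tensor (e : ℕ ≃ ℕ × ℕ) (x y : ℕ →₀ ℝ) : ℕ →₀ ℝ :=
  Finsupp.onFinset ((x.support ×ˢ y.support).image e.symm)
    (fun n => x (e n).1 * y (e n).2)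
    (fun n h => by
      simp only [Finset.mem_image, Finset.mem_product]
      exact ⟨e n, ⟨Finsupp.mem_support_iff.2 (left_ne_zero_of_mul h),
        Finsupp.mem_support_iff.2 (right_ne_zero_of_mul h)⟩, e.symm_apply_apply n⟩)

/-- The sequence `1ⁿ` consisting of `n` ones followed by zeros. -/
noncomputable def oneVec (n : ℕ) : ℕ →₀ ℝ :=
  Finsupp.indicator (Finset.range n) (fun _ _ => 1)

open Finset Finsupp

/-! Tensor power trick: `‖x ⊗ ⋯ ⊗ x‖ = ‖x‖ᵏ` and `‖x ⊗ ⋯ ⊗ x‖_∞ = ‖x‖_∞ᵏ`, so it suffices to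
compare `‖·‖` with `‖·‖_∞` up to constant factors.

Upper bound `‖x‖ ≤ 3 ‖x‖_∞`: a nonnegative vector with entries at most `B` is a combination of
indicators `1_S` with nonnegative weights of total at most `B` (peel off its least value on its
support), and `‖1_S‖ = 1` by permutation invariance; a general `x` is such a vector, with bound
`2 ‖x‖_∞`, minus `‖x‖_∞ 1_{supp x}`.

Lower bound `|xᵢ| ≤ 2 ‖x‖`: for `j` outside the support, swapping `i` and `j` gives
`x - σx = xᵢ (eᵢ - eⱼ)`, and `‖eᵢ - eⱼ‖ ≥ 2 ‖eᵢ‖ - ‖eᵢ + eⱼ‖ = 1`. -/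

structure IsNormalizedSymmetric (p : Seminorm ℝ (ℕ →₀ ℝ)) : Prop where
  map_perm : ∀ (σ : Equiv.Perm ℕ) (x), p (equivMapDomain σ x) = p x
  map_oneVec : ∀ n : ℕ, 1 ≤ n → p (oneVec n) = 1

theorem equivMapDomain_indicator_const {α M : Type*} [Zero M] (σ : Equiv.Perm α) (S : Finset α)
    (c : M) :
    equivMapDomain σ (indicator S fun _ _ => c) = indicator (S.map σ.toEmbedding) fun _ _ => c := by
  classical
  ext i
  simp [indicator_apply]

theorem le_of_forall_pow_le_mul_pow {a b C : ℝ} (h : ∀ k : ℕ, a ^ k ≤ C * b ^ k) : a ≤ b := by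
  rcases le_or_gt b 0 with hb | hb
  · have hC : 1 ≤ C := by simpa using h 0
    nlinarith [h 1]
  by_contra! hab
  obtain ⟨k, hk⟩ := pow_unbounded_of_one_lt C ((one_lt_div hb).2 hab)
  rw [div_pow, lt_div_iff₀ (by positivity)] at hk
  linarith [h k]

namespace IsNormalizedSymmetric

variable {p : Seminorm ℝ (ℕ →₀ ℝ)} (hp : IsNormalizedSymmetric p)
include hp

theorem apply_indicator_one {S : Finset ℕ} (hS : S.Nonempty) :
    p (indicator S fun _ _ => 1) = 1 := by
  obtain ⟨σ, hσ⟩ := Equiv.Perm.exists_map_finset_eq (range S.card) S (card_range _)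
  rw [← hσ, ← equivMapDomain_indicator_const, hp.map_perm]
  exact hp.map_oneVec _ (card_pos.2 hS)

theorem apply_indicator_one_le (S : Finset ℕ) : p (indicator S fun _ _ => 1) ≤ 1 := by
  rcases S.eq_empty_or_nonempty with rfl | hS
  · rw [show (indicator ∅ fun _ _ => (1 : ℝ)) = 0 from
      ext fun i => indicator_of_notMem (notMem_empty i) _, map_zero]
    exact zero_le_one
  · exact (hp.apply_indicator_one hS).le

theorem apply_le_of_nonneg_of_le {x : ℕ →₀ ℝ} {B : ℝ} (h0 : ∀ i, 0 ≤ x i) (hB : ∀ i, x i ≤ B) :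
    p x ≤ B := by
  classical
  induction hn : x.support.card using Nat.strong_induction_on generalizing x B with
  | _ n ih =>
  rcases x.support.eq_empty_or_nonempty with hx | hx
  · rw [support_eq_empty.1 hx, map_zero]
    exact (h0 0).trans (hB 0)
  obtain ⟨i₀, hi₀, hmin⟩ := exists_min_image x.support x hx
  set a := x i₀
  set v := indicator x.support fun _ _ => (1 : ℝ)
  set y := x - a • v
  have hy : ∀ i, y i = if i ∈ x.support then x i - a else 0 := by
    intro i
    by_cases hi : i ∈ x.support
    · simp [y, v, indicator_apply, hi]
    · simp [y, v, indicator_apply, hi, notMem_support_iff.1 hi]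
  have hsupp : y.support ⊆ x.support.erase i₀ := by
    intro i hi
    rw [mem_support_iff, hy] at hi
    split_ifs at hi with h
    · exact mem_erase.2 ⟨by rintro rfl; simp [a] at hi, h⟩
    · exact absurd rfl hi
  have hy0 : ∀ i, 0 ≤ y i := fun i => by
    rw [hy]
    split_ifs with h
    exacts [sub_nonneg.2 (hmin i h), le_rfl]
  have hyB : ∀ i, y i ≤ B - a := fun i => by
    rw [hy]
    split_ifs
    exacts [by linarith [hB i], by linarith [hB i₀, h0 i₀]]
  have hy_le : p y ≤ B - a :=
    ih _ (hn ▸ (card_le_card hsupp).trans_lt (card_erase_lt_of_mem hi₀)) hy0 hyB rfl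
  calc p x = p (y + a • v) := by rw [sub_add_cancel]
    _ ≤ p y + |a| * p v :=
        (map_add_le_add p _ _).trans_eq (by rw [map_smul_eq_mul, Real.norm_eq_abs])
    _ ≤ (B - a) + a * 1 := by
        rw [abs_of_nonneg (h0 i₀)]
        gcongr
        · exact h0 i₀
        · exact hp.apply_indicator_one_le _
    _ = B := by ring

theorem apply_le_three_mul {x : ℕ →₀ ℝ} {B : ℝ} (hB : ∀ i, |x i| ≤ B) : p x ≤ 3 * B := by
  classical
  have hB0 : 0 ≤ B := (abs_nonneg _).trans (hB 0)
  set v := indicator x.support fun _ _ => (1 : ℝ)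
  have hshift : ∀ i, 0 ≤ (x + B • v) i ∧ (x + B • v) i ≤ 2 * B := by
    intro i
    by_cases hi : i ∈ x.support
    · simp only [v, Finsupp.add_apply, Finsupp.smul_apply, indicator_of_mem hi, smul_eq_mul,
        mul_one]
      constructor <;> linarith [abs_le.1 (hB i)]
    · simp [v, indicator_of_notMem hi, notMem_support_iff.1 hi, hB0]
  calc p x = p ((x + B • v) - B • v) := by rw [add_sub_cancel_right]
    _ ≤ p (x + B • v) + |B| * p v :=
        (map_sub_le_add p _ _).trans_eq (by rw [map_smul_eq_mul, Real.norm_eq_abs])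
    _ ≤ 2 * B + B * 1 := by
        rw [abs_of_nonneg hB0]
        gcongr
        · exact hp.apply_le_of_nonneg_of_le (fun i => (hshift i).1) (fun i => (hshift i).2)
        · exact hp.apply_indicator_one_le _
    _ = 3 * B := by ring

theorem one_le_apply_single_sub_single {i j : ℕ} (hij : i ≠ j) :
    1 ≤ p (single i 1 - single j 1) := by
  classical
  have h_single : p (single i 1) = 1 := by
    refine (congrArg p ?_).trans (hp.apply_indicator_one (singleton_nonempty i))
    ext k
    by_cases hki : k = i <;> simp [indicator_apply, hki]
  have h_pair : p (single i 1 + single j 1) ≤ 1 := by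
    refine le_of_eq_of_le (congrArg p ?_) (hp.apply_indicator_one_le {i, j})
    ext k
    by_cases hki : k = i <;> by_cases hkj : k = j <;>
      simp [indicator_apply, hki, hkj, Ne.symm, hij]
  have h_two : (2 : ℝ) • single i (1 : ℝ) =
      (single i 1 + single j 1) + (single i 1 - single j 1) := by
    rw [two_smul]; abel
  have : (2 : ℝ) ≤ 1 + p (single i 1 - single j 1) :=
    calc (2 : ℝ) = p ((2 : ℝ) • single i 1) := by rw [map_smul_eq_mul, h_single]; norm_num
      _ ≤ p (single i 1 + single j 1) + p (single i 1 - single j 1) := h_two ▸ map_add_le_add p _ _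
      _ ≤ 1 + p (single i 1 - single j 1) := by gcongr
  linarith

theorem abs_apply_le_two_mul (x : ℕ →₀ ℝ) (i : ℕ) : |x i| ≤ 2 * p x := by
  obtain ⟨j, hj⟩ := Infinite.exists_notMem_finset (insert i x.support)
  obtain ⟨hji, hjx⟩ := not_or.1 (mem_insert.not.1 hj)
  rw [notMem_support_iff] at hjx
  have hdiff : x - equivMapDomain (Equiv.swap i j) x = x i • (single i 1 - single j 1) := by
    ext k
    rcases eq_or_ne k i with rfl | hki
    · simp [equivMapDomain_apply, hji, hjx]
    rcases eq_or_ne k j with rfl | hkj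
    · simp [equivMapDomain_apply, hki, hjx]
    · simp [equivMapDomain_apply, Equiv.swap_apply_of_ne_of_ne hki hkj, hki.symm, hkj.symm]
  calc |x i| ≤ |x i| * p (single i 1 - single j 1) :=
        le_mul_of_one_le_right (abs_nonneg _) (hp.one_le_apply_single_sub_single (Ne.symm hji))
    _ = p (x - equivMapDomain (Equiv.swap i j) x) := by
        rw [hdiff, map_smul_eq_mul, Real.norm_eq_abs]
    _ ≤ p x + p (equivMapDomain (Equiv.swap i j) x) := map_sub_le_add p _ _
    _ = 2 * p x := by rw [hp.map_perm]; ring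

end IsNormalizedSymmetric

section TensorPower

variable (e : ℕ ≃ ℕ × ℕ)

theorem tensor_apply (x y : ℕ →₀ ℝ) (n : ℕ) : tensor e x y n = x (e n).1 * y (e n).2 := rfl

noncomputable def tensorPow (x : ℕ →₀ ℝ) : ℕ → ℕ →₀ ℝ
  | 0 => oneVec 1
  | k + 1 => tensor e x (tensorPow x k)

theorem abs_tensorPow_apply_le {x : ℕ →₀ ℝ} {B : ℝ} (hB : ∀ i, |x i| ≤ B) (k n : ℕ) :
    |tensorPow e x k n| ≤ B ^ k := by
  induction k generalizing n with
  | zero =>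
    classical
    simp only [tensorPow, oneVec, indicator_apply, pow_zero]
    split_ifs <;> norm_num
  | succ k ih =>
    rw [tensorPow, tensor_apply, abs_mul, pow_succ']
    exact mul_le_mul (hB _) (ih _) (abs_nonneg _) ((abs_nonneg _).trans (hB 0))

theorem exists_tensorPow_apply_eq_pow (x : ℕ →₀ ℝ) (i k : ℕ) :
    ∃ n, tensorPow e x k n = x i ^ k := by
  induction k with
  | zero => exact ⟨0, by rw [tensorPow, oneVec, indicator_of_mem (mem_range.2 one_pos), pow_zero]⟩
  | succ k ih =>
    obtain ⟨n, hn⟩ := ih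
    exact ⟨e.symm (i, n), by rw [tensorPow, tensor_apply, e.apply_symm_apply, hn, pow_succ']⟩

theorem apply_tensorPow {p : Seminorm ℝ (ℕ →₀ ℝ)}
    (hmul : ∀ x y, p (tensor e x y) = p x * p y) (hone : p (oneVec 1) = 1) (x : ℕ →₀ ℝ) (k : ℕ) :
    p (tensorPow e x k) = p x ^ k := by
  induction k with
  | zero => exact hone
  | succ k ih => rw [tensorPow, hmul, ih, pow_succ']

end TensorPower

theorem IsNormalizedSymmetric.apply_eq_iSup_abs {p : Seminorm ℝ (ℕ →₀ ℝ)}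
    (hp : IsNormalizedSymmetric p) (e : ℕ ≃ ℕ × ℕ) (hmul : ∀ x y, p (tensor e x y) = p x * p y)
    (x : ℕ →₀ ℝ) : p x = ⨆ i, |x i| := by
  have hpow := apply_tensorPow e hmul (hp.map_oneVec 1 le_rfl) x
  have hbdd : BddAbove (Set.range fun i => |x i|) := by
    rw [← Function.comp_def, Set.range_comp]
    exact (x.finite_range.image abs).bddAbove
  apply le_antisymm
  · refine le_of_forall_pow_le_mul_pow (C := 3) fun k => ?_
    rw [← hpow]
    exact hp.apply_le_three_mul (abs_tensorPow_apply_le e (le_ciSup hbdd) k)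
  · refine ciSup_le fun i => le_of_forall_pow_le_mul_pow (C := 2) fun k => ?_
    obtain ⟨n, hn⟩ := exists_tensorPow_apply_eq_pow e x i k
    rw [← abs_pow, ← hn, ← hpow]
    exact hp.abs_apply_le_two_mul _ n

theorem linfty_case_general
    (e : ℕ ≃ ℕ × ℕ) (N : (ℕ →₀ ℝ) → ℝ)
    (hadd : ∀ x y, N (x + y) ≤ N x + N y)
    (hsmul : ∀ (c : ℝ) (x), N (c • x) = |c| * N x)
    (hperm : ∀ (σ : Equiv.Perm ℕ) (x), N (Finsupp.equivMapDomain σ x) = N x)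
    (hmul : ∀ x y, N (tensor e x y) = N x * N y)
    (hone : ∀ n : ℕ, 1 ≤ n → N (oneVec n) = 1) :
    ∀ x : ℕ →₀ ℝ, N x = ⨆ i, |x i| :=
  let p : Seminorm ℝ (ℕ →₀ ℝ) := Seminorm.of N hadd fun c x => by rw [hsmul, Real.norm_eq_abs]
  IsNormalizedSymmetric.apply_eq_iSup_abs (p := p) ⟨hperm, hone⟩ e hmul

/-- If `‖1ⁿ‖ = 1` for every `n ≥ 1`, then `‖x‖ = ‖x‖_∞ = max_i |x_i|`. -/
theorem linfty_case
    (e : ℕ ≃ ℕ × ℕ) (N : (ℕ →₀ ℝ) → ℝ)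
    (hadd : ∀ x y, N (x + y) ≤ N x + N y)
    (hsmul : ∀ (c : ℝ) (x), N (c • x) = |c| * N x)
    (hdef : ∀ x, N x = 0 ↔ x = 0)
    (hperm : ∀ (σ : Equiv.Perm ℕ) (x), N (Finsupp.equivMapDomain σ x) = N x)
    (hmul : ∀ x y, N (tensor e x y) = N x * N y)
    (hone : ∀ n : ℕ, 1 ≤ n → N (oneVec n) = 1) :
    ∀ x : ℕ →₀ ℝ, N x = ⨆ i, |x i| :=
  linfty_case_general e N hadd hsmul hperm hmul hone
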